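/- Truth lemma: for every W-logic WL, every WL-segment (Σ, C) in the canonical model M^c for WL, and every formula A: M^c, (Σ,C) ⊩ A if and only if A ∈ Σ. -/

import Mathlib

set_option autoImplicit false

/-- Formulas of the propositional modal language:
`A ::= p | ⊥ | A∧A | A∨A | A→A | □A | ◇A`. -/
inductive Formula : Type
  | var : ℕ → Formula
  | bot : Formula
  | and : Formula → Formula → Formula
  | or : Formula → Formula → Formula
  | imp : Formula → Formula → Formula
  | box : Formula → Formula
  | dia : Formula → Formula
  deriving DecidableEq

/-- `¬A := A → ⊥`. -/
def Formula.neg (A : Formula) : Formula := A.imp Formula.bot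

/-- `⊤ := ⊥ → ⊥`. -/
def Formula.top : Formula := Formula.bot.imp Formula.bot

/-- A specification of which additional modal axioms a logic has:
`N` (□⊤ / N-condition), `C` (C_□ together with K_◇ in W-logics),
`P` (P_□ classically / P_◇ in W-logics), `D` (□A→◇A), `T` (T_□, and T_◇ in W-logics). -/
structure LogicSpec where
  hasN : Bool := false
  hasC : Bool := false
  hasP : Bool := false
  hasD : Bool := false
  hasT : Bool := false

/-- The names of the fourteen systems. -/
inductive LName : Type
  | M | MN | MC | K | MP | MNP | MD | MND | MCD | KD | MT | MNT | MCT | KT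

/-- The axiom flags of the fourteen classical modal logics. -/
def cSpec : LName → LogicSpec
  | .M   => {}
  | .MN  => { hasN := true }
  | .MC  => { hasC := true }
  | .K   => { hasN := true, hasC := true }
  | .MP  => { hasP := true }
  | .MNP => { hasN := true, hasP := true }
  | .MD  => { hasD := true }
  | .MND => { hasN := true, hasD := true }
  | .MCD => { hasC := true, hasD := true }
  | .KD  => { hasN := true, hasC := true, hasD := true }
  | .MT  => { hasT := true }
  | .MNT => { hasN := true, hasT := true }
  | .MCT => { hasC := true, hasT := true }
  | .KT  => { hasN := true, hasC := true, hasT := true }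

/-- The axiom flags of the fourteen W-logics (WMD and WMCD include the axiom P_◇ explicitly). -/
def wSpec : LName → LogicSpec
  | .MD  => { hasP := true, hasD := true }
  | .MCD => { hasC := true, hasP := true, hasD := true }
  | n    => cSpec n

/-- Hilbert-style provability in the W-logic determined by the flags `S`:
intuitionistic propositional logic plus dual∧, the monotonicity rules M_□ and M_◇,
and, according to the flags, N_□, C_□ together with K_◇, P_◇, D, T_□ together with T_◇. -/
inductive WProof (S : LogicSpec) : Formula → Prop
  | ax1 (A B : Formula) : WProof S (A.imp (B.imp A))
  | ax2 (A B C : Formula) : WProof S ((A.imp (B.imp C)).imp ((A.imp B).imp (A.imp C)))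
  | andI (A B : Formula) : WProof S (A.imp (B.imp (A.and B)))
  | andE1 (A B : Formula) : WProof S ((A.and B).imp A)
  | andE2 (A B : Formula) : WProof S ((A.and B).imp B)
  | orI1 (A B : Formula) : WProof S (A.imp (A.or B))
  | orI2 (A B : Formula) : WProof S (B.imp (A.or B))
  | orE (A B C : Formula) : WProof S ((A.imp C).imp ((B.imp C).imp ((A.or B).imp C)))
  | botE (A : Formula) : WProof S (Formula.bot.imp A)
  | mp {A B : Formula} : WProof S (A.imp B) → WProof S A → WProof S B
  | dualAnd (A : Formula) : WProof S (((Formula.box A).and (Formula.dia A.neg)).neg)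
  | monBox {A B : Formula} : WProof S (A.imp B) → WProof S ((Formula.box A).imp (Formula.box B))
  | monDia {A B : Formula} : WProof S (A.imp B) → WProof S ((Formula.dia A).imp (Formula.dia B))
  | nBox : S.hasN = true → WProof S (Formula.box Formula.top)
  | cBox (A B : Formula) : S.hasC = true →
      WProof S (((Formula.box A).and (Formula.box B)).imp (Formula.box (A.and B)))
  | kDia (A B : Formula) : S.hasC = true →
      WProof S ((Formula.box (A.imp B)).imp ((Formula.dia A).imp (Formula.dia B)))
  | pDia : S.hasP = true → WProof S (Formula.dia Formula.top)
  | dAx (A : Formula) : S.hasD = true → WProof S ((Formula.box A).imp (Formula.dia A))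
  | tBox (A : Formula) : S.hasT = true → WProof S ((Formula.box A).imp A)
  | tDia (A : Formula) : S.hasT = true → WProof S (A.imp (Formula.dia A))

/-- Conjunction of a list of formulas (empty conjunction is ⊤). -/
def conjList : List Formula → Formula
  | [] => Formula.top
  | [A] => A
  | A :: B :: l => A.and (conjList (B :: l))

/-- Disjunction of a list of formulas (empty disjunction is ⊥). -/
def disjList : List Formula → Formula
  | [] => Formula.bot
  | [A] => A
  | A :: B :: l => A.or (disjList (B :: l))

/-- `⋀Γ` for a finite multiset `Γ` (empty `Γ` is read as ⊤). -/
noncomputable def conjM (Γ : Multiset Formula) : Formula := conjList Γ.toList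

/-- `⋁Δ` for a finite multiset `Δ` (empty `Δ` is read as ⊥). -/
noncomputable def disjM (Δ : Multiset Formula) : Formula := disjList Δ.toList

/-- `A` is deducible in the W-logic `S` from the set of formulas `Sg`:
there is a finite subset `{B₁,…,Bₙ} ⊆ Sg` with `⊢ B₁∧…∧Bₙ → A`. -/
def Deduces (S : LogicSpec) (Sg : Set Formula) (A : Formula) : Prop :=
  ∃ L : List Formula, (∀ B ∈ L, B ∈ Sg) ∧ WProof S ((conjList L).imp A)

/-- A WL-prime set: consistent, closed under deduction, and with the disjunction property. -/
structure IsPrime (S : LogicSpec) (Sg : Set Formula) : Prop where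
  consistent : ¬ Deduces S Sg Formula.bot
  closed : ∀ A : Formula, Deduces S Sg A → A ∈ Sg
  disj : ∀ A B : Formula, (A.or B) ∈ Sg → A ∈ Sg ∨ B ∈ Sg

/-- A WL-segment `(Sg, C)`: `Sg` is WL-prime and `C` is a class of sets of WL-prime
sets satisfying the box and diamond conditions, together with the extra conditions
for logics containing C_□ & K_◇, D, or T_□ & T_◇. -/
structure IsSegment (S : LogicSpec) (Sg : Set Formula) (C : Set (Set (Set Formula))) : Prop where
  prime : IsPrime S Sg
  allPrime : ∀ U ∈ C, ∀ Pr ∈ U, IsPrime S Pr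
  boxCond : ∀ A : Formula, Formula.box A ∈ Sg → ∃ U ∈ C, ∀ Pr ∈ U, A ∈ Pr
  diaCond : ∀ A : Formula, Formula.dia A ∈ Sg → ∀ U ∈ C, ∃ Pr ∈ U, A ∈ Pr
  cCond : S.hasC = true → ∀ U ∈ C, ∀ U' ∈ C, U ∩ U' ∈ C
  dCond : S.hasD = true → ∀ U ∈ C, ∀ U' ∈ C, (U ∩ U').Nonempty
  tCond : S.hasT = true → ∀ U ∈ C, Sg ∈ U

/-- A constructive neighbourhood model (CNM): a preorder `le` of intuitionistic
accessibility, a neighbourhood function `N`, and a hereditary valuation `V`. -/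
structure CNM (W : Type) where
  le : W → W → Prop
  le_refl : ∀ w, le w w
  le_trans : ∀ u v w, le u v → le v w → le u w
  N : W → Set (Set W)
  V : ℕ → Set W
  hered : ∀ (p : ℕ) (u v : W), le u v → u ∈ V p → v ∈ V p

/-- Forcing in a constructive neighbourhood model:
`w ⊩ B→C` iff for all `v ≥ w`, `v ⊩ B` implies `v ⊩ C`;
`w ⊩ □B` iff for all `v ≥ w` there is `α ∈ N(v)` with `u ⊩ B` for all `u ∈ α`;
`w ⊩ ◇B` iff for all `v ≥ w` and all `α ∈ N(v)` there is `u ∈ α` with `u ⊩ B`. -/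
def CNM.force {W : Type} (M : CNM W) : Formula → W → Prop
  | Formula.var p, w => w ∈ M.V p
  | Formula.bot, _ => False
  | Formula.and A B, w => M.force A w ∧ M.force B w
  | Formula.or A B, w => M.force A w ∨ M.force B w
  | Formula.imp A B, w => ∀ v, M.le w v → M.force A v → M.force B v
  | Formula.box A, w => ∀ v, M.le w v → ∃ α ∈ M.N v, ∀ u ∈ α, M.force A u
  | Formula.dia A, w => ∀ v, M.le w v → ∀ α ∈ M.N v, ∃ u ∈ α, M.force A u

/-- `M` is a constructive neighbourhood model for the W-logic with flags `S`: it
satisfies the condition (C), (N), (T), (D), (P) corresponding to each modal axiom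
of the logic among C_□ (with K_◇), N_□, T_□ (with T_◇), D, P_◇. -/
def CNM.forLogic {W : Type} (S : LogicSpec) (M : CNM W) : Prop :=
  (S.hasC = true → ∀ w, ∀ α ∈ M.N w, ∀ β ∈ M.N w, α ∩ β ∈ M.N w) ∧
  (S.hasN = true → ∀ w, M.N w ≠ ∅) ∧
  (S.hasT = true → ∀ w, ∀ α ∈ M.N w, w ∈ α) ∧
  (S.hasD = true → ∀ w, ∀ α ∈ M.N w, ∀ β ∈ M.N w, (α ∩ β).Nonempty) ∧
  (S.hasP = true → ∀ w, ∅ ∉ M.N w)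

/-- The worlds of the canonical model for the W-logic `S`: the WL-segments. -/
def Seg (S : LogicSpec) : Type :=
  { x : Set Formula × Set (Set (Set Formula)) // IsSegment S x.1 x.2 }

/-- The canonical model for the W-logic `S`: worlds are WL-segments,
`(Σ,C) ≤ (Σ',C')` iff `Σ ⊆ Σ'`, the neighbourhoods of `(Σ,C)` are the sets
`α_U = {(Σ',C') : Σ' ∈ U}` for `U ∈ C`, and `(Σ,C) ∈ V(p)` iff `p ∈ Σ`. -/
def canonical (S : LogicSpec) : CNM (Seg S) where
  le x y := x.1.1 ⊆ y.1.1
  le_refl _ := subset_rfl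
  le_trans _ _ _ h1 h2 := fun _ ha => h2 (h1 ha)
  N x := { α | ∃ U ∈ x.1.2, α = { y : Seg S | y.1.1 ∈ U } }
  V p := { x : Seg S | Formula.var p ∈ x.1.1 }
  hered _ _ _ hle h := hle h

/-!
The proof is the standard canonical-model argument, by induction on `A`. Implication uses
Lindenbaum's lemma: a prime extension of `Σ ∪ {A}` avoiding `B` is a segment above `(Σ,C)`.
For `□A`, re-equip `Σ` with the neighbourhoods `U_B = {primes ∋ B}`, `□B ∈ Σ`; forcing `□A`
makes some `U_B` consist of primes containing `A`, so `B ⊢ A` and `□A ∈ Σ` by M_□.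
For `◇A ∉ Σ`, add the neighbourhood of primes avoiding `A`; the diamond condition for it is
where M_◇ (and K_◇ under C_□) is used, and for logics with D its nonemptiness needs `◇⊤`,
supplied by P_◇ or by N_□ with D.
-/

namespace WProof

variable {S : LogicSpec} {A B C X : Formula}

theorem imp_self (A : Formula) : WProof S (A.imp A) :=
  mp (mp (ax2 A (A.imp A) A) (ax1 A (A.imp A))) (ax1 A A)

theorem top : WProof S Formula.top := imp_self Formula.bot

theorem imp_intro (h : WProof S A) : WProof S (X.imp A) := mp (ax1 A X) h

theorem imp_trans (h₁ : WProof S (A.imp B)) (h₂ : WProof S (B.imp C)) : WProof S (A.imp C) :=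
  mp (mp (ax2 A B C) (imp_intro h₂)) h₁

theorem mp_under (h₁ : WProof S (X.imp (A.imp B))) (h₂ : WProof S (X.imp A)) :
    WProof S (X.imp B) :=
  mp (mp (ax2 X A B) h₁) h₂

theorem imp_swap (h : WProof S (A.imp (B.imp C))) : WProof S (B.imp (A.imp C)) :=
  imp_trans (ax1 B A) (mp (ax2 A B C) h)

theorem and_intro_under (h₁ : WProof S (X.imp A)) (h₂ : WProof S (X.imp B)) :
    WProof S (X.imp (A.and B)) :=
  mp_under (imp_trans h₁ (andI A B)) h₂

theorem conjList_imp_of_mem : ∀ {L : List Formula}, A ∈ L → WProof S ((conjList L).imp A)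
  | [_], h => by obtain rfl := List.mem_singleton.1 h; exact imp_self A
  | B :: C :: l, h => by
    rcases List.mem_cons.1 h with rfl | h
    · exact andE1 A (conjList (C :: l))
    · exact imp_trans (andE2 B (conjList (C :: l))) (conjList_imp_of_mem h)

theorem imp_conjList : ∀ {L : List Formula}, (∀ A ∈ L, WProof S (X.imp A)) →
    WProof S (X.imp (conjList L))
  | [], _ => imp_intro top
  | [A], h => h A List.mem_cons_self
  | A :: _ :: _, h =>
    and_intro_under (h A List.mem_cons_self)
      (imp_conjList fun C hC => h C (List.mem_cons_of_mem A hC))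

theorem conjList_imp_conjList_of_subset {L L' : List Formula} (h : L ⊆ L') :
    WProof S ((conjList L').imp (conjList L)) :=
  imp_conjList fun _ hA => conjList_imp_of_mem (h hA)

theorem curry {L : List Formula} (h : WProof S ((conjList (B :: L)).imp A)) :
    WProof S ((conjList L).imp (B.imp A)) := by
  cases L with
  | nil => exact imp_intro h
  | cons C l =>
    exact imp_swap (imp_trans (andI B (conjList (C :: l))) (mp (ax2 _ _ A) (imp_intro h)))

theorem uncurry {L : List Formula} (h : WProof S ((conjList L).imp (B.imp A))) :
    WProof S ((conjList (B :: L)).imp A) :=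
  mp_under (imp_trans (conjList_imp_conjList_of_subset (List.subset_cons_self B L)) h)
    (conjList_imp_of_mem List.mem_cons_self)

end WProof

namespace Deduces

variable {S : LogicSpec} {Sg Sg' : Set Formula} {A B : Formula}

theorem of_mem (h : A ∈ Sg) : Deduces S Sg A :=
  ⟨[A], by simpa using h, WProof.imp_self A⟩

theorem of_proof (h : WProof S A) : Deduces S Sg A :=
  ⟨[], by simp, WProof.imp_intro h⟩

theorem mono (hsub : Sg ⊆ Sg') (h : Deduces S Sg A) : Deduces S Sg' A :=
  let ⟨L, hL, p⟩ := h
  ⟨L, fun B hB => hsub (hL B hB), p⟩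

theorem mp (h₁ : Deduces S Sg (A.imp B)) (h₂ : Deduces S Sg A) : Deduces S Sg B := by
  obtain ⟨L₁, hL₁, p₁⟩ := h₁
  obtain ⟨L₂, hL₂, p₂⟩ := h₂
  refine ⟨L₁ ++ L₂, fun C hC => (List.mem_append.1 hC).elim (hL₁ C) (hL₂ C), ?_⟩
  exact WProof.mp_under
    (WProof.imp_trans (WProof.conjList_imp_conjList_of_subset (List.subset_append_left L₁ L₂)) p₁)
    (WProof.imp_trans (WProof.conjList_imp_conjList_of_subset (List.subset_append_right L₁ L₂)) p₂)

theorem proof_of_empty (h : Deduces S ∅ A) : WProof S A := by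
  obtain ⟨_ | ⟨B, _⟩, hL, p⟩ := h
  · exact WProof.mp p WProof.top
  · exact absurd (hL B List.mem_cons_self) (Set.notMem_empty B)

end Deduces

theorem deduces_insert_iff {S : LogicSpec} {Sg : Set Formula} {A B : Formula} :
    Deduces S (insert B Sg) A ↔ Deduces S Sg (B.imp A) := by
  constructor
  · rintro ⟨L, hL, p⟩
    have hsub : L ⊆ B :: L.filter (· ≠ B) := fun C hC => by
      by_cases hCB : C = B
      · exact hCB ▸ List.mem_cons_self
      · exact List.mem_cons_of_mem B (List.mem_filter.2 ⟨hC, by simpa using hCB⟩)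
    refine ⟨L.filter (· ≠ B), fun C hC => ?_, ?_⟩
    · obtain ⟨hCL, hCB⟩ := List.mem_filter.1 hC
      exact (hL C hCL).resolve_left (by simpa using hCB)
    · exact WProof.curry (WProof.imp_trans (WProof.conjList_imp_conjList_of_subset hsub) p)
  · rintro ⟨L, hL, p⟩
    refine ⟨B :: L, fun C hC => ?_, WProof.uncurry p⟩
    rcases List.mem_cons.1 hC with rfl | hC
    exacts [Set.mem_insert C Sg, Set.mem_insert_of_mem B (hL C hC)]

theorem WProof.imp_of_deduces_singleton {S : LogicSpec} {A B : Formula}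
    (h : Deduces S {B} A) : WProof S (B.imp A) :=
  Deduces.proof_of_empty (deduces_insert_iff.1 (by rwa [insert_empty_eq]))

namespace IsPrime

variable {S : LogicSpec} {Sg : Set Formula} {A B : Formula}

theorem mem_of_proof (h : IsPrime S Sg) (p : WProof S A) : A ∈ Sg :=
  h.closed A (Deduces.of_proof p)

theorem mp_mem (h : IsPrime S Sg) (hAB : A.imp B ∈ Sg) (hA : A ∈ Sg) : B ∈ Sg :=
  h.closed B (Deduces.mp (Deduces.of_mem hAB) (Deduces.of_mem hA))

theorem imp_mem (h : IsPrime S Sg) (p : WProof S (A.imp B)) (hA : A ∈ Sg) : B ∈ Sg :=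
  h.mp_mem (h.mem_of_proof p) hA

theorem bot_notMem (h : IsPrime S Sg) : Formula.bot ∉ Sg :=
  fun hb => h.consistent (Deduces.of_mem hb)

theorem and_mem (h : IsPrime S Sg) : A.and B ∈ Sg ↔ A ∈ Sg ∧ B ∈ Sg :=
  ⟨fun hAB => ⟨h.imp_mem (WProof.andE1 A B) hAB, h.imp_mem (WProof.andE2 A B) hAB⟩,
    fun ⟨hA, hB⟩ => h.mp_mem (h.imp_mem (WProof.andI A B) hA) hB⟩

theorem or_mem (h : IsPrime S Sg) : A.or B ∈ Sg ↔ A ∈ Sg ∨ B ∈ Sg :=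
  ⟨h.disj A B, fun hAB => hAB.elim (h.imp_mem (WProof.orI1 A B)) (h.imp_mem (WProof.orI2 A B))⟩

theorem not_box_and_dia_neg (h : IsPrime S Sg) (hbox : Formula.box A ∈ Sg)
    (hdia : Formula.dia A.neg ∈ Sg) : False :=
  h.bot_notMem (h.mp_mem (h.mem_of_proof (WProof.dualAnd A)) (h.and_mem.2 ⟨hbox, hdia⟩))

end IsPrime

theorem exists_isPrime_superset_notMem {S : LogicSpec} {Sg : Set Formula} {A : Formula}
    (h : ¬ Deduces S Sg A) : ∃ Pr, Sg ⊆ Pr ∧ IsPrime S Pr ∧ A ∉ Pr := by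
  obtain ⟨m, hsub, hmax⟩ := zorn_subset_nonempty {Γ : Set Formula | ¬ Deduces S Γ A}
    (fun c hc hchain hne => by
      refine ⟨⋃₀ c, ?_, fun s hs => Set.subset_sUnion_of_mem hs⟩
      rintro ⟨L, hL, p⟩
      obtain ⟨Γ, hΓ, hLΓ⟩ := hchain.directedOn.exists_mem_subset_of_finite_of_subset_sUnion
        hne (List.finite_toSet L) hL
      exact hc hΓ ⟨L, hLΓ, p⟩) Sg h
  have hm : ¬ Deduces S m A := hmax.prop
  have hext : ∀ B ∉ m, Deduces S m (B.imp A) := fun B hB => by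
    by_contra hd
    exact hB (hmax.2 (mt deduces_insert_iff.1 hd) (Set.subset_insert B m) (Set.mem_insert B m))
  refine ⟨m, hsub, ⟨fun hbot => hm (Deduces.mp (Deduces.of_proof (WProof.botE A)) hbot),
    fun B hB => ?_, fun B C hBC => ?_⟩, fun hA => hm (Deduces.of_mem hA)⟩
  · by_contra hBm
    exact hm (Deduces.mp (hext B hBm) hB)
  · by_contra! hBC'
    obtain ⟨hB, hC⟩ := hBC'
    have hcases := ((Deduces.of_proof (WProof.orE B C A)).mp (hext B hB)).mp (hext C hC)
    exact hm (hcases.mp (Deduces.of_mem hBC))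

section CanonicalSegments

variable {S : LogicSpec} {Sg : Set Formula} {A B B' : Formula}

def primesWith (S : LogicSpec) (B : Formula) : Set (Set Formula) := {Pr | IsPrime S Pr ∧ B ∈ Pr}

def boxNbhds (S : LogicSpec) (Sg : Set Formula) : Set (Set (Set Formula)) :=
  {U | ∃ B, Formula.box B ∈ Sg ∧ U = primesWith S B}

/-- Under C_□ every prime in `diaRefuter S Sg A` must lie in all the `primesWith S B` with
`□B ∈ Sg`, so that adding `diaRefuter S Sg A` keeps the neighbourhoods closed under `∩`. -/
def boxedUnderC (S : LogicSpec) (Sg : Set Formula) : Set Formula :=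
  {C | S.hasC = true ∧ Formula.box C ∈ Sg}

def diaRefuter (S : LogicSpec) (Sg : Set Formula) (A : Formula) : Set (Set Formula) :=
  {Pr | IsPrime S Pr ∧ A ∉ Pr ∧ boxedUnderC S Sg ⊆ Pr}

theorem primesWith_inter : primesWith S B ∩ primesWith S B' = primesWith S (B.and B') := by
  ext Pr
  exact ⟨fun ⟨⟨hPr, hB⟩, _, hB'⟩ => ⟨hPr, hPr.and_mem.2 ⟨hB, hB'⟩⟩,
    fun ⟨hPr, hBB'⟩ => ⟨⟨hPr, (hPr.and_mem.1 hBB').1⟩, hPr, (hPr.and_mem.1 hBB').2⟩⟩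

theorem IsPrime.exists_isPrime_of_box_of_dia (hP : IsPrime S Sg) (hbox : Formula.box B ∈ Sg)
    (hdia : Formula.dia B' ∈ Sg) : ∃ Pr, IsPrime S Pr ∧ B ∈ Pr ∧ B' ∈ Pr := by
  have hcon : ¬ Deduces S {B, B'} Formula.bot := fun hded =>
    hP.not_box_and_dia_neg hbox
      (hP.imp_mem (WProof.monDia (WProof.imp_of_deduces_singleton (deduces_insert_iff.1 hded)))
        hdia)
  obtain ⟨Pr, hsub, hPr, -⟩ := exists_isPrime_superset_notMem hcon
  exact ⟨Pr, hPr, hsub (Set.mem_insert B _), hsub (Set.mem_insert_of_mem B rfl)⟩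

theorem IsPrime.box_conjList_mem (hP : IsPrime S Sg) (hC : S.hasC = true) :
    ∀ {L : List Formula}, L ≠ [] → (∀ C ∈ L, Formula.box C ∈ Sg) →
      Formula.box (conjList L) ∈ Sg
  | [C], _, h => h C List.mem_cons_self
  | C :: D :: l, _, h =>
    hP.imp_mem (WProof.cBox C (conjList (D :: l)) hC) <| hP.and_mem.2
      ⟨h C List.mem_cons_self,
        hP.box_conjList_mem hC (List.cons_ne_nil D l) fun E hE => h E (List.mem_cons_of_mem C hE)⟩

theorem IsPrime.proof_or_box_mem_of_deduces (hP : IsPrime S Sg)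
    (h : Deduces S (boxedUnderC S Sg) A) : WProof S A ∨ S.hasC = true ∧ Formula.box A ∈ Sg := by
  obtain ⟨_ | ⟨C, l⟩, hL, p⟩ := h
  · exact Or.inl (WProof.mp p WProof.top)
  · have hC : S.hasC = true := (hL C List.mem_cons_self).1
    exact Or.inr ⟨hC, hP.imp_mem (WProof.monBox p)
      (hP.box_conjList_mem hC (List.cons_ne_nil C l) fun D hD => (hL D hD).2)⟩

theorem IsPrime.exists_mem_diaRefuter (hP : IsPrime S Sg) (hdia : Formula.dia B ∈ Sg)
    (hA : Formula.dia A ∉ Sg) : ∃ Pr ∈ diaRefuter S Sg A, B ∈ Pr := by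
  have hcon : ¬ Deduces S (insert B (boxedUnderC S Sg)) A := fun hded => by
    rcases hP.proof_or_box_mem_of_deduces (deduces_insert_iff.1 hded) with p | ⟨hC, hbox⟩
    · exact hA (hP.imp_mem (WProof.monDia p) hdia)
    · exact hA (hP.mp_mem (hP.imp_mem (WProof.kDia B A hC) hbox) hdia)
  obtain ⟨Pr, hsub, hPr, hAPr⟩ := exists_isPrime_superset_notMem hcon
  exact ⟨Pr, ⟨hPr, hAPr, (Set.subset_insert B _).trans hsub⟩, hsub (Set.mem_insert B _)⟩

theorem IsPrime.dia_mem_of_box_mem (hP : IsPrime S Sg) (hD : S.hasD = true)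
    (hbox : Formula.box B ∈ Sg) : Formula.dia B ∈ Sg :=
  hP.imp_mem (WProof.dAx B hD) hbox

theorem boxNbhds_isSegment (hP : IsPrime S Sg) : IsSegment S Sg (boxNbhds S Sg) where
  prime := hP
  allPrime := by
    rintro _ ⟨B, -, rfl⟩ Pr hPr
    exact hPr.1
  boxCond A hA := ⟨primesWith S A, ⟨A, hA, rfl⟩, fun _ hPr => hPr.2⟩
  diaCond := by
    rintro A hA _ ⟨B, hB, rfl⟩
    obtain ⟨Pr, hPr, hBPr, hAPr⟩ := hP.exists_isPrime_of_box_of_dia hB hA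
    exact ⟨Pr, ⟨hPr, hBPr⟩, hAPr⟩
  cCond := by
    rintro hC _ ⟨B, hB, rfl⟩ _ ⟨B', hB', rfl⟩
    exact ⟨B.and B', hP.imp_mem (WProof.cBox B B' hC) (hP.and_mem.2 ⟨hB, hB'⟩),
      primesWith_inter⟩
  dCond := by
    rintro hD _ ⟨B, hB, rfl⟩ _ ⟨B', hB', rfl⟩
    obtain ⟨Pr, hPr, hBPr, hB'Pr⟩ :=
      hP.exists_isPrime_of_box_of_dia hB (hP.dia_mem_of_box_mem hD hB')
    exact ⟨Pr, ⟨hPr, hBPr⟩, hPr, hB'Pr⟩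
  tCond := by
    rintro hT _ ⟨B, hB, rfl⟩
    exact ⟨hP, hP.imp_mem (WProof.tBox B hT) hB⟩

theorem IsSegment.insert {C : Set (Set (Set Formula))} {U : Set (Set Formula)}
    (hSeg : IsSegment S Sg C) (hprime : ∀ Pr ∈ U, IsPrime S Pr)
    (hdia : ∀ A, Formula.dia A ∈ Sg → ∃ Pr ∈ U, A ∈ Pr)
    (hsub : S.hasC = true → ∀ U' ∈ C, U ⊆ U')
    (hne : S.hasD = true → U.Nonempty ∧ ∀ U' ∈ C, (U' ∩ U).Nonempty)
    (hmem : S.hasT = true → Sg ∈ U) : IsSegment S Sg (insert U C) where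
  prime := hSeg.prime
  allPrime := by
    rintro U' (rfl | hU')
    exacts [hprime, hSeg.allPrime U' hU']
  boxCond A hA :=
    let ⟨U', hU', hall⟩ := hSeg.boxCond A hA
    ⟨U', Set.mem_insert_of_mem U hU', hall⟩
  diaCond := by
    rintro A hA U' (rfl | hU')
    exacts [hdia A hA, hSeg.diaCond A hA U' hU']
  cCond := by
    rintro hC U₁ (rfl | hU₁) U₂ (rfl | hU₂)
    · rw [Set.inter_self]; exact Set.mem_insert _ _
    · rw [Set.inter_eq_left.2 (hsub hC U₂ hU₂)]; exact Set.mem_insert _ _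
    · rw [Set.inter_eq_right.2 (hsub hC U₁ hU₁)]; exact Set.mem_insert _ _
    · exact Set.mem_insert_of_mem U (hSeg.cCond hC U₁ hU₁ U₂ hU₂)
  dCond := by
    rintro hD U₁ (rfl | hU₁) U₂ (rfl | hU₂)
    · rw [Set.inter_self]; exact (hne hD).1
    · rw [Set.inter_comm]; exact (hne hD).2 U₂ hU₂
    · exact (hne hD).2 U₁ hU₁
    · exact hSeg.dCond hD U₁ hU₁ U₂ hU₂
  tCond := by
    rintro hT U' (rfl | hU')
    exacts [hmem hT, hSeg.tCond hT U' hU']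

theorem insert_diaRefuter_isSegment (hS : S.hasD = true → S.hasP = true ∨ S.hasN = true)
    (hP : IsPrime S Sg) (hA : Formula.dia A ∉ Sg) :
    IsSegment S Sg (insert (diaRefuter S Sg A) (boxNbhds S Sg)) := by
  refine (boxNbhds_isSegment hP).insert (fun _ hPr => hPr.1)
    (fun B hB => hP.exists_mem_diaRefuter hB hA) ?_ (fun hD => ⟨?_, ?_⟩) ?_
  · rintro hC _ ⟨B, hB, rfl⟩ Pr ⟨hPr, -, hboxed⟩
    exact ⟨hPr, hboxed ⟨hC, hB⟩⟩
  · have htop : Formula.dia Formula.top ∈ Sg := (hS hD).elim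
      (fun hPd => hP.mem_of_proof (WProof.pDia hPd))
      (fun hN => hP.dia_mem_of_box_mem hD (hP.mem_of_proof (WProof.nBox hN)))
    obtain ⟨Pr, hPr, -⟩ := hP.exists_mem_diaRefuter htop hA
    exact ⟨Pr, hPr⟩
  · rintro _ ⟨B, hB, rfl⟩
    obtain ⟨Pr, hPr, hBPr⟩ := hP.exists_mem_diaRefuter (hP.dia_mem_of_box_mem hD hB) hA
    exact ⟨Pr, ⟨hPr.1, hBPr⟩, hPr⟩
  · intro hT
    exact ⟨hP, fun hA' => hA (hP.imp_mem (WProof.tDia A hT) hA'),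
      fun C ⟨_, hC⟩ => hP.imp_mem (WProof.tBox C hT) hC⟩

end CanonicalSegments

def Seg.ofPrime {S : LogicSpec} {Pr : Set Formula} (hPr : IsPrime S Pr) : Seg S :=
  ⟨(Pr, boxNbhds S Pr), boxNbhds_isSegment hPr⟩

namespace Canonical

variable {S : LogicSpec} {A B : Formula}

theorem force_imp_iff (ihA : ∀ y : Seg S, (canonical S).force A y ↔ A ∈ y.1.1)
    (ihB : ∀ y : Seg S, (canonical S).force B y ↔ B ∈ y.1.1) (x : Seg S) :
    (canonical S).force (A.imp B) x ↔ A.imp B ∈ x.1.1 := by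
  refine ⟨fun hf => ?_, fun hAB y hxy hA => (ihB y).2 (y.2.prime.mp_mem (hxy hAB) ((ihA y).1 hA))⟩
  by_contra hAB
  have hnd : ¬ Deduces S (insert A x.1.1) B := fun hd =>
    hAB (x.2.prime.closed _ (deduces_insert_iff.1 hd))
  obtain ⟨Pr, hsub, hPr, hBPr⟩ := exists_isPrime_superset_notMem hnd
  have hxy : (canonical S).le x (Seg.ofPrime hPr) := (Set.subset_insert A _).trans hsub
  exact hBPr ((ihB _).1 (hf _ hxy ((ihA _).2 (hsub (Set.mem_insert A _)))))

theorem force_box_iff (ih : ∀ y : Seg S, (canonical S).force A y ↔ A ∈ y.1.1) (x : Seg S) :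
    (canonical S).force (Formula.box A) x ↔ Formula.box A ∈ x.1.1 := by
  refine ⟨fun hf => ?_, fun hA y hxy => ?_⟩
  · obtain ⟨_, ⟨_, ⟨B, hB, rfl⟩, rfl⟩, hall⟩ := hf (Seg.ofPrime x.2.prime) subset_rfl
    have hBA : Deduces S {B} A := by
      by_contra hnd
      obtain ⟨Pr, hsub, hPr, hAPr⟩ := exists_isPrime_superset_notMem hnd
      exact hAPr ((ih _).1 (hall (Seg.ofPrime hPr) ⟨hPr, hsub rfl⟩))
    exact x.2.prime.imp_mem (WProof.monBox (WProof.imp_of_deduces_singleton hBA)) hB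
  · obtain ⟨U, hU, hall⟩ := y.2.boxCond A (hxy hA)
    exact ⟨{z : Seg S | z.1.1 ∈ U}, ⟨U, hU, rfl⟩, fun z hz => (ih z).2 (hall _ hz)⟩

theorem force_dia_iff (hS : S.hasD = true → S.hasP = true ∨ S.hasN = true)
    (ih : ∀ y : Seg S, (canonical S).force A y ↔ A ∈ y.1.1) (x : Seg S) :
    (canonical S).force (Formula.dia A) x ↔ Formula.dia A ∈ x.1.1 := by
  refine ⟨fun hf => ?_, fun hA y hxy _ ⟨U, hU, hα⟩ => ?_⟩
  · by_contra hA
    let y : Seg S := ⟨(x.1.1, insert (diaRefuter S x.1.1 A) (boxNbhds S x.1.1)),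
      insert_diaRefuter_isSegment hS x.2.prime hA⟩
    obtain ⟨z, hz, hAz⟩ := hf y subset_rfl _ ⟨_, Set.mem_insert _ _, rfl⟩
    exact hz.2.1 ((ih z).1 hAz)
  · obtain ⟨Pr, hPr, hAPr⟩ := y.2.diaCond A (hxy hA) U hU
    exact ⟨Seg.ofPrime (y.2.allPrime U hU Pr hPr), hα ▸ hPr, (ih _).2 hAPr⟩

theorem force_iff (hS : S.hasD = true → S.hasP = true ∨ S.hasN = true) (A : Formula)
    (x : Seg S) : (canonical S).force A x ↔ A ∈ x.1.1 := by
  induction A generalizing x with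
  | var p => rfl
  | bot => exact ⟨False.elim, fun h => x.2.prime.bot_notMem h⟩
  | and A B ihA ihB => exact (and_congr (ihA x) (ihB x)).trans x.2.prime.and_mem.symm
  | or A B ihA ihB => exact (or_congr (ihA x) (ihB x)).trans x.2.prime.or_mem.symm
  | imp A B ihA ihB => exact force_imp_iff ihA ihB x
  | box A ih => exact force_box_iff ih x
  | dia A ih => exact force_dia_iff hS ih x

end Canonical

theorem wSpec_hasP_or_hasN_of_hasD (L : LName) :
    (wSpec L).hasD = true → (wSpec L).hasP = true ∨ (wSpec L).hasN = true := by
  cases L <;> simp [wSpec, cSpec]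

/-- truth lemma: in the canonical model for a W-logic WL, a segment
`(Σ,C)` forces `A` iff `A ∈ Σ`. -/
theorem statement18 (L : LName) (x : Seg (wSpec L)) (A : Formula) :
    (canonical (wSpec L)).force A x ↔ A ∈ x.1.1 :=
  Canonical.force_iff (wSpec_hasP_or_hasN_of_hasD L) A x
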